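/- arXiv:0807.0891 — 2 statements merged into one kernel-verified Lean document; each statement's English description precedes it below -/
import Mathlib

section
/- Let k = (m, m, ..., m, n) with d−1 coordinates equal to m and last coordinate n, where m, n ≥ 1. If D ⊆ [k] is complementable by lines, then |D| is representable by k, i.e., |D| is a non-negative integer combination of m and n. -/
open Finset

/-- The discrete box `[k₁] × ⋯ × [k_d]`, with `[n] = {1, …, n}`. -/
def box {d : ℕ} (k : Fin d → ℕ) : Finset (Fin d → ℕ) :=
  Fintype.piFinset fun i => Finset.Icc 1 (k i)

/-- The line in direction `s` through the point `x`. -/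
def line {d : ℕ} (k : Fin d → ℕ) (s : Fin d) (x : Fin d → ℕ) : Finset (Fin d → ℕ) :=
  (box k).filter fun y => ∀ i, i ≠ s → y i = x i

/-- `D ⊆ [k]` is complementable by lines: its complement is a disjoint union of lines. -/
def ComplementableByLines {d : ℕ} (k : Fin d → ℕ) (D : Finset (Fin d → ℕ)) : Prop :=
  ∃ L : Finset (Finset (Fin d → ℕ)),
    (∀ l ∈ L, ∃ s, ∃ x ∈ box k, l = line k s x) ∧
    (L : Set (Finset (Fin d → ℕ))).PairwiseDisjoint id ∧
    L.biUnion id = box k \ D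

lemma mem_box {d : ℕ} {k : Fin d → ℕ} {y : Fin d → ℕ} :
    y ∈ box k ↔ ∀ i, y i ∈ Finset.Icc 1 (k i) :=
  Fintype.mem_piFinset

lemma line_eq_piFinset {d : ℕ} (k : Fin d → ℕ) (s : Fin d) (x : Fin d → ℕ)
    (hx : x ∈ box k) :
    line k s x = Fintype.piFinset (fun i => if i = s then Finset.Icc 1 (k i) else {x i}) := by
  ext y
  simp only [line, Finset.mem_filter, Fintype.mem_piFinset, mem_box]
  constructor
  · rintro ⟨hy, h⟩ i
    by_cases hi : i = s
    · simp [hi, hy s]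
    · simp [hi, h i hi]
  · intro hy
    constructor
    · intro i
      by_cases hi : i = s
      · have := hy i; simpa [hi] using this
      · have := hy i; simp only [hi, if_false, Finset.mem_singleton] at this
        rw [this]; exact mem_box.mp hx i
    · intro i hi
      have := hy i; simpa [hi] using this

lemma card_line {d : ℕ} (k : Fin d → ℕ) (s : Fin d) (x : Fin d → ℕ)
    (hx : x ∈ box k) : (line k s x).card = k s := by
  rw [line_eq_piFinset k s x hx, Fintype.card_piFinset]
  have : ∀ i : Fin d, (if i = s then Finset.Icc 1 (k i) else {x i}).card
      = if i = s then k i else 1 := by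
    intro i; by_cases hi : i = s <;> simp [hi]
  rw [Finset.prod_congr rfl (fun i _ => this i)]
  rw [Finset.prod_ite_eq' Finset.univ s (fun i => k i)]
  simp

theorem stmt_7 {d : ℕ} (m n : ℕ) (hm : 1 ≤ m) (hn : 1 ≤ n) (hd : 1 ≤ d)
    (k : Fin d → ℕ) (hk : ∀ i : Fin d, k i = if (i : ℕ) = d - 1 then n else m)
    (D : Finset (Fin d → ℕ)) (hD : D ⊆ box k)
    (h : ComplementableByLines k D) :
    ∃ a b : ℕ, D.card = a * m + b * n := by
  obtain ⟨L, hLlines, hLdisj, hLunion⟩ := h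
  set j0 : Fin d := ⟨d - 1, by omega⟩ with hj0def
  have hkj0 : k j0 = n := by rw [hk]; simp [hj0def]
  have hki : ∀ i : Fin d, i ≠ j0 → k i = m := by
    intro i hi
    rw [hk, if_neg]
    intro hcon
    exact hi (Fin.ext hcon)
  have h1mem : (1 : ℕ) ∈ Finset.Icc 1 n := by simp [hn]
  -- slice cardinality
  have hslice : ∀ t ∈ Finset.Icc 1 n,
      ((box k).filter fun y => y j0 = t).card = m ^ (d - 1) := by
    intro t ht
    have heq : ((box k).filter fun y => y j0 = t)
        = Fintype.piFinset (fun i => if i = j0 then ({t} : Finset ℕ) else Finset.Icc 1 m) := by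
      ext y
      simp only [Finset.mem_filter, Fintype.mem_piFinset, mem_box]
      constructor
      · rintro ⟨hy, hyt⟩ i
        by_cases hi : i = j0
        · simp [hi, hyt]
        · have := hy i; rw [hki i hi] at this; simp [hi, this]
      · intro hy
        constructor
        · intro i
          by_cases hi : i = j0
          · have := hy i; simp only [hi, if_true, Finset.mem_singleton] at this
            rw [hi, this, hkj0]; exact ht
          · have := hy i; rw [hki i hi]; simpa [hi] using this
        · have := hy j0; simpa using this
    rw [heq, Fintype.card_piFinset]
    have : ∀ i : Fin d, (if i = j0 then ({t} : Finset ℕ) else Finset.Icc 1 m).card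
        = if i = j0 then 1 else m := by
      intro i; by_cases hi : i = j0 <;> simp [hi]
    rw [Finset.prod_congr rfl (fun i _ => this i)]
    rw [← Finset.mul_prod_erase Finset.univ _ (Finset.mem_univ j0)]
    rw [if_pos rfl, one_mul]
    rw [Finset.prod_congr rfl (fun i hi => if_neg (Finset.ne_of_mem_erase hi))]
    rw [Finset.prod_const, Finset.card_erase_of_mem (Finset.mem_univ j0)]
    simp [Fintype.card_fin]
  -- fiberwise decomposition of D
  have hfib : ∀ y ∈ D, y j0 ∈ Finset.Icc 1 n := by
    intro y hy
    have := mem_box.mp (hD hy) j0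
    rwa [hkj0] at this
  have hDcard : D.card = ∑ t ∈ Finset.Icc 1 n, (D.filter fun y => y j0 = t).card :=
    Finset.card_eq_sum_card_fiberwise hfib
  -- complement slices
  set c : ℕ → ℕ := fun t => ((box k \ D).filter fun y => y j0 = t).card with hc
  have hsum : ∀ t ∈ Finset.Icc 1 n,
      (D.filter fun y => y j0 = t).card + c t = m ^ (d - 1) := by
    intro t ht
    have hdisj : Disjoint (D.filter fun y => y j0 = t)
        ((box k \ D).filter fun y => y j0 = t) :=
      Finset.disjoint_filter_filter Finset.disjoint_sdiff
    rw [← Finset.card_union_of_disjoint hdisj, ← Finset.filter_union,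
      Finset.union_sdiff_of_subset hD]
    exact hslice t ht
  -- vertical line slices are singletons
  have hvert : ∀ x ∈ box k, ∀ t ∈ Finset.Icc 1 n,
      ((line k j0 x).filter fun y => y j0 = t) = {Function.update x j0 t} := by
    intro x hx t ht
    ext y
    simp only [line, Finset.mem_filter, Finset.mem_singleton]
    constructor
    · rintro ⟨⟨_, hy⟩, hyt⟩
      funext i
      by_cases hi : i = j0
      · subst hi; rw [Function.update_self]; exact hyt
      · rw [Function.update_of_ne hi]; exact hy i hi
    · rintro rfl
      refine ⟨⟨mem_box.mpr fun i => ?_, fun i hi => Function.update_of_ne hi _ _⟩, by simp⟩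
      by_cases hi : i = j0
      · subst hi; rw [Function.update_self, hkj0]; exact ht
      · rw [Function.update_of_ne hi]; exact mem_box.mp hx i
  -- each line meets all slices in a constant count mod m
  have hlinemod : ∀ l ∈ L, ∀ t ∈ Finset.Icc 1 n, ∀ t' ∈ Finset.Icc 1 n,
      ((l.filter fun y => y j0 = t).card) % m = ((l.filter fun y => y j0 = t').card) % m := by
    intro l hl t ht t' ht'
    obtain ⟨s, x, hx, rfl⟩ := hLlines l hl
    by_cases hs : s = j0
    · subst hs
      rw [hvert x hx t ht, hvert x hx t' ht']
      simp
    · have key : ∀ u : ℕ, (((line k s x).filter fun y => y j0 = u).card) % m = 0 := by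
        intro u
        have hconst : ∀ y ∈ line k s x, y j0 = x j0 := by
          intro y hy
          simp only [line, Finset.mem_filter] at hy
          exact hy.2 j0 (fun hcon => hs hcon.symm)
        by_cases hxu : x j0 = u
        · rw [Finset.filter_true_of_mem (fun y hy => by rw [hconst y hy, hxu])]
          rw [card_line k s x hx, hki s hs, Nat.mod_self]
        · rw [Finset.filter_false_of_mem (fun y hy => by rw [hconst y hy]; exact hxu)]
          simp
      rw [key t, key t']
  -- c t mod m is constant
  have hcmod : ∀ t ∈ Finset.Icc 1 n, c t % m = c 1 % m := by
    intro t ht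
    have hrw : ∀ u : ℕ, c u = ∑ l ∈ L, ((l.filter fun y => y j0 = u).card) := by
      intro u
      rw [hc]
      simp only
      rw [← hLunion, Finset.filter_biUnion,
        Finset.card_biUnion (fun l hl l' hl' hne =>
          Finset.disjoint_filter_filter (hLdisj hl hl' hne))]
      simp
    rw [hrw t, hrw 1]
    have hcongr : (∑ l ∈ L, ((l.filter fun y => y j0 = t).card % m))
        = ∑ l ∈ L, ((l.filter fun y => y j0 = 1).card % m) :=
      Finset.sum_congr rfl fun l hl => hlinemod l hl t ht 1 h1mem
    conv_lhs => rw [Finset.sum_nat_mod]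
    conv_rhs => rw [Finset.sum_nat_mod]
    rw [hcongr]
  -- D slices mod m constant
  set r : ℕ := (D.filter fun y => y j0 = 1).card % m with hr
  have hDmod : ∀ t ∈ Finset.Icc 1 n, (D.filter fun y => y j0 = t).card % m = r := by
    intro t ht
    have h2 : (D.filter fun y => y j0 = t).card + c t
        = (D.filter fun y => y j0 = 1).card + c 1 := by
      rw [hsum t ht, hsum 1 h1mem]
    have hmod : (D.filter fun y => y j0 = t).card ≡ (D.filter fun y => y j0 = 1).card [MOD m] :=
      Nat.ModEq.add_right_cancel (hcmod t ht) (by rw [h2])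
    exact hmod
  -- conclude
  refine ⟨∑ t ∈ Finset.Icc 1 n, (D.filter fun y => y j0 = t).card / m, r, ?_⟩
  rw [hDcard]
  have : ∀ t ∈ Finset.Icc 1 n,
      (D.filter fun y => y j0 = t).card = (D.filter fun y => y j0 = t).card / m * m + r := by
    intro t ht
    rw [← hDmod t ht]
    exact (Nat.div_add_mod' _ m).symm
  have hsum2 : ∑ t ∈ Finset.Icc 1 n, (D.filter fun y => y j0 = t).card
      = ∑ t ∈ Finset.Icc 1 n, ((D.filter fun y => y j0 = t).card / m * m + r) :=
    Finset.sum_congr rfl this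
  rw [hsum2]
  rw [Finset.sum_add_distrib]
  rw [Finset.sum_const]
  rw [Nat.card_Icc]
  rw [← Finset.sum_mul]
  rw [smul_eq_mul]
  have hn1 : n + 1 - 1 = n := Nat.add_sub_cancel n 1
  rw [hn1, mul_comm r n]
end

section
/- For any positive integers k₁, k₂, k₃ and any l_i with 1 ≤ l_i ≤ k_i − 1, the set D = ([l₁]×[l₂]×[l₃]) ∪ (([k₁]∖[l₁])×([k₂]∖[l₂])×([k₃]∖[l₃])) ⊆ [k₁]×[k₂]×[k₃] is complementable by lines, and |D| = l₁l₂l₃ + (k₁−l₁)(k₂−l₂)(k₃−l₃). -/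
open Finset

def other1 : Fin 3 → Fin 3 | 0 => 1 | 1 => 2 | 2 => 0
def other2 : Fin 3 → Fin 3 | 0 => 2 | 1 => 0 | 2 => 1

lemma other1_ne (s : Fin 3) : other1 s ≠ s := by fin_cases s <;> decide
lemma other2_ne (s : Fin 3) : other2 s ≠ s := by fin_cases s <;> decide

/-- The "mixed" condition in direction `s`: coordinate `other1 s` is low and
coordinate `other2 s` is high. -/
def Cond (l : Fin 3 → ℕ) (s : Fin 3) (x : Fin 3 → ℕ) : Prop :=
  x (other1 s) ≤ l (other1 s) ∧ l (other2 s) < x (other2 s)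

lemma cond_congr {l : Fin 3 → ℕ} {s : Fin 3} {x y : Fin 3 → ℕ}
    (h : ∀ i, i ≠ s → y i = x i) (hx : Cond l s x) : Cond l s y := by
  unfold Cond at *
  rw [h _ (other1_ne s), h _ (other2_ne s)]
  exact hx

lemma cond_exclusive {l x : Fin 3 → ℕ} {s t : Fin 3} (hst : s ≠ t)
    (hs : Cond l s x) (ht : Cond l t x) : False := by
  fin_cases s <;> fin_cases t <;>
    simp only [Cond, other1, other2] at hs ht <;>
    first
      | exact hst rfl
      | omega

lemma cond_exists {l x : Fin 3 → ℕ} (h1 : ¬ ∀ i, x i ≤ l i) (h2 : ¬ ∀ i, l i < x i) :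
    ∃ s, Cond l s x := by
  push_neg at h1 h2
  obtain ⟨i, hi⟩ := h1
  obtain ⟨j, hj⟩ := h2
  have hi' : l i < x i := hi
  have hj' : x j ≤ l j := Nat.le_of_lt_succ (Nat.lt_succ_of_le hj)
  rcases le_or_gt (x 0) (l 0) with h0 | h0 <;>
    rcases le_or_gt (x 1) (l 1) with ha | ha <;>
    rcases le_or_gt (x 2) (l 2) with hb | hb
  · exfalso
    have hall : ∀ m : Fin 3, x m ≤ l m := by
      intro m; fin_cases m <;> assumption
    exact absurd hi' (not_lt.mpr (hall i))
  · exact ⟨0, by simpa [Cond, other1, other2] using ⟨ha, hb⟩⟩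
  · exact ⟨2, by simpa [Cond, other1, other2] using ⟨h0, ha⟩⟩
  · exact ⟨2, by simpa [Cond, other1, other2] using ⟨h0, ha⟩⟩
  · exact ⟨1, by simpa [Cond, other1, other2] using ⟨hb, h0⟩⟩
  · exact ⟨0, by simpa [Cond, other1, other2] using ⟨ha, hb⟩⟩
  · exact ⟨1, by simpa [Cond, other1, other2] using ⟨hb, h0⟩⟩
  · exfalso
    have hall : ∀ m : Fin 3, l m < x m := by
      intro m; fin_cases m <;> assumption
    exact absurd hj' (not_le.mpr (hall j))

noncomputable def dirOf (l x : Fin 3 → ℕ) : Fin 3 := by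
  classical
  exact if Cond l 0 x then 0 else if Cond l 1 x then 1 else 2

lemma cond_dirOf {l x : Fin 3 → ℕ} (h : ∃ s, Cond l s x) : Cond l (dirOf l x) x := by
  obtain ⟨s, hs⟩ := h
  unfold dirOf
  split_ifs with h0 h1
  · exact h0
  · exact h1
  · fin_cases s
    · exact absurd hs h0
    · exact absurd hs h1
    · exact hs

lemma mem_line_self {k : Fin 3 → ℕ} {s : Fin 3} {x : Fin 3 → ℕ} (hx : x ∈ box k) :
    x ∈ line k s x :=
  mem_filter.mpr ⟨hx, fun _ _ => rfl⟩

lemma line_eq {k : Fin 3 → ℕ} {s : Fin 3} {x y : Fin 3 → ℕ}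
    (h : ∀ i, i ≠ s → y i = x i) : line k s x = line k s y := by
  unfold line
  apply filter_congr
  intro z _
  exact forall_congr' fun i => forall_congr' fun hi => by rw [h i hi]

theorem stmt_9 (k l : Fin 3 → ℕ) (hk : ∀ i, 0 < k i)
    (hl : ∀ i, 1 ≤ l i ∧ l i ≤ k i - 1)
    (D : Finset (Fin 3 → ℕ))
    (hDdef : D = (box k).filter fun x => (∀ i, x i ≤ l i) ∨ (∀ i, l i < x i)) :
    ComplementableByLines k D ∧ D.card = ∏ i, l i + ∏ i, (k i - l i) := by
  have hlk : ∀ i, l i ≤ k i := fun i => le_trans (hl i).2 (Nat.sub_le _ _)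
  have hmemD : ∀ x, x ∈ box k \ D ↔
      x ∈ box k ∧ ¬(∀ i, x i ≤ l i) ∧ ¬(∀ i, l i < x i) := by
    intro x
    subst hDdef
    simp only [mem_sdiff, mem_filter, not_and, not_or]
    constructor
    · rintro ⟨hb, hd⟩
      exact ⟨hb, hd hb⟩
    · rintro ⟨hb, h1, h2⟩
      exact ⟨hb, fun _ => ⟨h1, h2⟩⟩
  have hcond : ∀ x ∈ box k \ D, Cond l (dirOf l x) x := by
    intro x hx
    obtain ⟨_, h1, h2⟩ := (hmemD x).mp hx
    exact cond_dirOf (cond_exists h1 h2)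
  constructor
  · refine ⟨(box k \ D).image (fun x => line k (dirOf l x) x), ?_, ?_, ?_⟩
    · intro a ha
      obtain ⟨x, hx, rfl⟩ := mem_image.mp ha
      exact ⟨dirOf l x, x, (mem_sdiff.mp hx).1, rfl⟩
    · intro a ha b hb hab
      obtain ⟨x, hx, rfl⟩ := mem_image.mp (mem_coe.mp ha)
      obtain ⟨y, hy, rfl⟩ := mem_image.mp (mem_coe.mp hb)
      show Disjoint (line k (dirOf l x) x) (line k (dirOf l y) y)
      rw [Finset.disjoint_left]
      intro z hzx hzy
      have hx' := (mem_filter.mp hzx).2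
      have hy' := (mem_filter.mp hzy).2
      have hcz1 : Cond l (dirOf l x) z := cond_congr hx' (hcond x hx)
      have hcz2 : Cond l (dirOf l y) z := cond_congr hy' (hcond y hy)
      have hst : dirOf l x = dirOf l y := by
        by_contra h
        exact cond_exclusive h hcz1 hcz2
      apply hab
      rw [line_eq hx', hst, line_eq hy']
    · ext z
      simp only [mem_biUnion, mem_image, id]
      constructor
      · rintro ⟨a, ⟨x, hx, rfl⟩, hz⟩
        have hz' := mem_filter.mp hz
        obtain ⟨hc1, hc2⟩ := cond_congr hz'.2 (hcond x hx)
        refine (hmemD z).mpr ⟨hz'.1, ?_, ?_⟩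
        · intro hall
          exact absurd (hall (other2 (dirOf l x))) (by omega)
        · intro hall
          exact absurd (hall (other1 (dirOf l x))) (by omega)
      · intro hz
        exact ⟨line k (dirOf l z) z, ⟨z, hz, rfl⟩,
          mem_line_self ((hmemD z).mp hz).1⟩
  · subst hDdef
    have hsplit : (box k).filter (fun x => (∀ i, x i ≤ l i) ∨ (∀ i, l i < x i)) =
        Fintype.piFinset (fun i => Icc 1 (l i)) ∪
        Fintype.piFinset (fun i => Icc (l i + 1) (k i)) := by
      ext x
      simp only [mem_filter, _root_.box, Fintype.mem_piFinset, mem_Icc, mem_union]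
      constructor
      · rintro ⟨hb, h | h⟩
        · exact Or.inl fun i => ⟨(hb i).1, h i⟩
        · exact Or.inr fun i => ⟨h i, (hb i).2⟩
      · rintro (h | h)
        · exact ⟨fun i => ⟨(h i).1, le_trans (h i).2 (hlk i)⟩, Or.inl fun i => (h i).2⟩
        · exact ⟨fun i => ⟨by have := (h i).1; omega, (h i).2⟩,
            Or.inr fun i => by have := (h i).1; omega⟩
    have hdisj : Disjoint (Fintype.piFinset (fun i : Fin 3 => Icc 1 (l i)))
        (Fintype.piFinset (fun i : Fin 3 => Icc (l i + 1) (k i))) := by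
      rw [Finset.disjoint_left]
      intro x h1 h2
      simp only [Fintype.mem_piFinset, mem_Icc] at h1 h2
      have := (h1 0).2
      have := (h2 0).1
      omega
    rw [hsplit, card_union_of_disjoint hdisj, Fintype.card_piFinset,
      Fintype.card_piFinset]
    simp [Nat.card_Icc, Nat.succ_sub_succ]
end
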